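/- Let P be a polynomial of degree n having all its zeros in |z| ≤ 1; that is, P(z) = α_n ∏_{j=1}^n (z − b_j) = α_0 + α_1 z + ⋯ + α_n z^n with α_n ≠ 0 and |b_j| ≤ 1 for j = 1, …, n. Then for every z with |z| = 1, |P′(z)| ≥ (n/2)·[ 1 + (1/n)·( |α_n| − |α_0| )/( |α_n| + |α_0| ) ]·|P(z)|. -/

import Mathlib

open Finset

private lemma aux_two (r s : ℝ) (hr0 : 0 ≤ r) (hr1 : r ≤ 1) (hs0 : 0 ≤ s) (hs1 : s ≤ 1) :
    (1 - r * s) / (1 + r * s) ≤ (1 - r) / (1 + r) + (1 - s) / (1 + s) := by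
  have h1 : (0:ℝ) < 1 + r := by linarith
  have h2 : (0:ℝ) < 1 + s := by linarith
  have h3 : (0:ℝ) < 1 + r * s := by positivity
  rw [div_add_div _ _ h1.ne' h2.ne', div_le_div_iff₀ h3 (by positivity)]
  nlinarith [mul_nonneg (mul_nonneg (sub_nonneg.2 hr1) (sub_nonneg.2 hs1))
      (sub_nonneg.2 (mul_le_one₀ hr1 hs0 hs1))]

private lemma aux_prod {ι : Type*} (s : Finset ι) (r : ι → ℝ)
    (h0 : ∀ i, 0 ≤ r i) (h1 : ∀ i, r i ≤ 1) :
    (1 - ∏ i ∈ s, r i) / (1 + ∏ i ∈ s, r i) ≤ ∑ i ∈ s, (1 - r i) / (1 + r i) := by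
  induction s using Finset.cons_induction with
  | empty => simp
  | cons a s ha ih =>
    rw [Finset.prod_cons, Finset.sum_cons]
    have hp0 : 0 ≤ ∏ i ∈ s, r i := Finset.prod_nonneg fun i _ => h0 i
    have hp1 : ∏ i ∈ s, r i ≤ 1 := Finset.prod_le_one (fun i _ => h0 i) (fun i _ => h1 i)
    calc (1 - r a * ∏ i ∈ s, r i) / (1 + r a * ∏ i ∈ s, r i)
        ≤ (1 - r a) / (1 + r a) + (1 - ∏ i ∈ s, r i) / (1 + ∏ i ∈ s, r i) :=
          aux_two _ _ (h0 a) (h1 a) hp0 hp1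
      _ ≤ (1 - r a) / (1 + r a) + ∑ i ∈ s, (1 - r i) / (1 + r i) := by linarith

private lemma aux_re (z b : ℂ) (hz : ‖z‖ = 1) (hb : ‖b‖ ≤ 1)
    (hzb : z - b ≠ 0) : 1 / (1 + ‖b‖) ≤ (z / (z - b)).re := by
  have hB0 : 0 ≤ ‖b‖ := norm_nonneg b
  have hnsz : z.re ^ 2 + z.im ^ 2 = 1 := by
    have := Complex.sq_norm z
    rw [hz] at this
    simp [Complex.normSq_apply] at this
    nlinarith [this]
  have hnsb : b.re ^ 2 + b.im ^ 2 = ‖b‖ ^ 2 := by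
    have h := Complex.sq_norm b
    rw [Complex.normSq_apply] at h
    nlinarith [h]
  have ht : |z.re * b.re + z.im * b.im| ≤ ‖b‖ := by
    have h := Complex.abs_re_le_norm (z * (starRingEnd ℂ) b)
    rw [norm_mul, Complex.norm_conj, hz, one_mul] at h
    simpa [Complex.mul_re] using h
  have ht' := abs_le.1 ht
  have hd : 0 < Complex.normSq (z - b) := Complex.normSq_pos.2 hzb
  have hd' : Complex.normSq (z - b) = (z.re - b.re) ^ 2 + (z.im - b.im) ^ 2 := by
    simp [Complex.normSq_apply]; ring
  rw [Complex.div_re, ← add_div, div_le_div_iff₀ (by linarith) hd]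
  rw [hd'] at hd ⊢
  simp only [Complex.sub_re, Complex.sub_im]
  nlinarith [mul_nonneg (sub_nonneg.2 hb)
      (by linarith : (0:ℝ) ≤ ‖b‖ + (z.re * b.re + z.im * b.im))]

theorem stmt17 (n : ℕ) (hn : 0 < n)
    (b : Fin n → ℂ) (hb : ∀ j, ‖b j‖ ≤ 1)
    (α : ℕ → ℂ) (hαn : α n ≠ 0)
    (P : ℂ → ℂ)
    (hP : ∀ z, P z = α n * ∏ j, (z - b j))
    (hPsum : ∀ z, P z = ∑ i ∈ Finset.range (n + 1), α i * z ^ i)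
    (z : ℂ) (hz : ‖z‖ = 1) :
    ((n : ℝ) / 2) * (1
          + (1 / (n : ℝ))
              * ((‖α n‖ - ‖α 0‖)
                  / (‖α n‖ + ‖α 0‖)))
        * ‖P z‖
      ≤ ‖deriv P z‖ := by
  by_cases hPz : P z = 0
  · rw [hPz, norm_zero, mul_zero]
    exact norm_nonneg _
  -- basic facts
  have hzj : ∀ j, z - b j ≠ 0 := by
    intro j
    have h : α n * ∏ j, (z - b j) ≠ 0 := by rw [← hP z]; exact hPz
    exact Finset.prod_ne_zero_iff.mp (mul_ne_zero_iff.mp h).2 j (Finset.mem_univ j)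
  -- derivative
  have hPfun : P = fun w => α n * ∏ j, (w - b j) := funext hP
  have hder : HasDerivAt P (α n * ∑ j, ∏ k ∈ Finset.univ.erase j, (z - b k)) z := by
    rw [hPfun]
    have h1 : HasDerivAt (fun w => ∏ j, (w - b j))
        (∑ j, (∏ k ∈ Finset.univ.erase j, (z - b k)) • (1:ℂ)) z :=
      HasDerivAt.fun_finsetProd (fun j _ => (hasDerivAt_id z).sub_const (b j))
    simpa [smul_eq_mul] using h1.const_mul (α n)
  -- logarithmic derivative identity
  have hlog : z * deriv P z / P z = ∑ j, z / (z - b j) := by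
    rw [hder.deriv, hP z, Finset.mul_sum, Finset.mul_sum, Finset.sum_div]
    refine Finset.sum_congr rfl fun j _ => ?_
    rw [← Finset.mul_prod_erase Finset.univ _ (Finset.mem_univ j)]
    have h1 : ∏ k ∈ Finset.univ.erase j, (z - b k) ≠ 0 :=
      Finset.prod_ne_zero_iff.2 fun k _ => hzj k
    rw [div_eq_div_iff (mul_ne_zero hαn (mul_ne_zero (hzj j) h1)) (hzj j)]
    ring
  -- α 0
  have hα0 : ‖α 0‖ = ‖α n‖ * ∏ j, ‖b j‖ := by
    have h0 : P 0 = α 0 := by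
      rw [hPsum 0, Finset.sum_eq_single 0]
      · simp
      · intro i _ hi; simp [zero_pow hi]
      · intro h; exact absurd (Finset.mem_range.2 (Nat.succ_pos n)) h
    have h0' : P 0 = α n * ∏ j, (-b j) := by
      rw [hP 0]
      congr 1
      exact Finset.prod_congr rfl fun j _ => zero_sub (b j)
    rw [← h0, h0', norm_mul, norm_prod]
    simp
  set a := ‖α n‖ with ha_def
  set t := ∏ j, ‖b j‖ with ht_def
  have ha : 0 < a := norm_pos_iff.2 hαn
  have ht0 : 0 ≤ t := Finset.prod_nonneg fun j _ => norm_nonneg _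
  have ht1 : t ≤ 1 := Finset.prod_le_one (fun j _ => norm_nonneg _) (fun j _ => hb j)
  -- constant simplification
  have hconst : (a - ‖α 0‖) / (a + ‖α 0‖) = (1 - t) / (1 + t) := by
    rw [hα0, show a - a * t = a * (1 - t) by ring, show a + a * t = a * (1 + t) by ring,
      mul_div_mul_left _ _ ha.ne']
  -- sum bound
  have hsum : (n : ℝ) / 2 + (1 - t) / (1 + t) / 2 ≤ ∑ j, 1 / (1 + ‖b j‖) := by
    have heq : ∀ j : Fin n, 1 / (1 + ‖b j‖)
        = 1 / 2 + (1 - ‖b j‖) / (1 + ‖b j‖) / 2 := by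
      intro j
      have h1 : (0:ℝ) < 1 + ‖b j‖ := by positivity
      field_simp
      ring
    rw [Finset.sum_congr rfl fun j _ => heq j, Finset.sum_add_distrib]
    have hcard : ∑ _j : Fin n, (1:ℝ) / 2 = (n:ℝ) / 2 := by
      simp [Finset.sum_const, Fintype.card_fin]
      ring
    rw [hcard]
    have := aux_prod Finset.univ (fun j => ‖b j‖)
      (fun j => norm_nonneg _) hb
    rw [← Finset.sum_div]
    linarith [this]
  -- real part bound
  have hre : ∑ j, 1 / (1 + ‖b j‖) ≤ (z * deriv P z / P z).re := by
    rw [hlog, Complex.re_sum]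
    exact Finset.sum_le_sum fun j _ => aux_re z (b j) hz (hb j) (hzj j)
  -- abs bound
  have habs : (z * deriv P z / P z).re ≤ ‖deriv P z‖ / ‖P z‖ := by
    calc (z * deriv P z / P z).re ≤ ‖z * deriv P z / P z‖ :=
          Complex.re_le_norm _
      _ = ‖deriv P z‖ / ‖P z‖ := by
          rw [norm_div, norm_mul, hz, one_mul]
  -- put everything together
  have hPabs : 0 < ‖P z‖ := norm_pos_iff.2 hPz
  have hkey : ((n : ℝ) / 2) * (1 + (1 / (n : ℝ)) * ((1 - t) / (1 + t)))
      ≤ ‖deriv P z‖ / ‖P z‖ := by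
    have hne : (n : ℝ) ≠ 0 := Nat.cast_ne_zero.2 hn.ne'
    have : ((n : ℝ) / 2) * (1 + (1 / (n : ℝ)) * ((1 - t) / (1 + t)))
        = (n : ℝ) / 2 + (1 - t) / (1 + t) / 2 := by
      field_simp
    rw [this]
    linarith
  rw [hconst]
  calc ((n : ℝ) / 2) * (1 + (1 / (n : ℝ)) * ((1 - t) / (1 + t))) * ‖P z‖
      ≤ (‖deriv P z‖ / ‖P z‖) * ‖P z‖ :=
        mul_le_mul_of_nonneg_right hkey hPabs.le
    _ = ‖deriv P z‖ := div_mul_cancel₀ _ hPabs.ne'
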